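/- If T is a locally-in-transitive tournament (the in-neighbourhood of every vertex induces a transitive subtournament) with γ(T) > 1, then γ(T) ≤ 3 and w(T) ≤ 3. -/

import Mathlib

variable {V : Type*}

/-- `S` dominates the digraph with arc relation `A`: every vertex is in `S`
or has an in-neighbour in `S`. -/
def Dom (A : V → V → Prop) (S : Set V) : Prop :=
  ∀ v, v ∈ S ∨ ∃ u ∈ S, A u v

/-- `l` (a nonempty list of visited vertices) is a closed directed walk:
consecutive vertices are joined by arcs and there is an arc from the last
vertex back to the first (or the walk is the trivial walk at one vertex). -/
def IsClosedWalk (A : V → V → Prop) (l : List V) : Prop :=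
  l ≠ [] ∧ l.Chain' A ∧
    (l.length = 1 ∨ ∀ a b, l.head? = some a → l.getLast? = some b → A b a)

/-- The length (number of arcs, with multiplicity) of the closed walk with
vertex list `l`. -/
def walkLength (l : List V) : ℕ := if l.length = 1 then 0 else l.length

/-- `l` is a closed dominating walk. -/
def IsCDW (A : V → V → Prop) (l : List V) : Prop :=
  IsClosedWalk A l ∧ Dom A {v | v ∈ l}

/-- The digraph has a closed dominating walk. -/
def HasCDW (A : V → V → Prop) : Prop := ∃ l, IsCDW A l

/-- The watchman number: minimum length of a closed dominating walk. -/
noncomputable def watchman (A : V → V → Prop) : ℕ :=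
  sInf {n | ∃ l, IsCDW A l ∧ walkLength l = n}

/-- A tournament: loopless, and exactly one arc between any two distinct vertices. -/
def IsTournament (A : V → V → Prop) : Prop :=
  (∀ v, ¬ A v v) ∧ ∀ u v : V, u ≠ v → (A u v ↔ ¬ A v u)

/-- The subdigraph induced on `S` is strongly connected. -/
def StronglyConnectedOn (A : V → V → Prop) (S : Set V) : Prop :=
  ∀ u ∈ S, ∀ v ∈ S, Relation.ReflTransGen (fun a b => a ∈ S ∧ b ∈ S ∧ A a b) u v

/-- The maximal strongly connected component containing `v`. -/
def StrongComp (A : V → V → Prop) (v : V) : Set V :=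
  {u | Relation.ReflTransGen A v u ∧ Relation.ReflTransGen A u v}

/-- The domination number. -/
noncomputable def domNum (A : V → V → Prop) : ℕ :=
  sInf {n | ∃ S : Set V, S.ncard = n ∧ Dom A S}

/-- The total domination number. -/
noncomputable def totalDomNum (A : V → V → Prop) : ℕ :=
  sInf {n | ∃ S : Set V, S.ncard = n ∧ ∀ v, ∃ u ∈ S, u ≠ v ∧ A u v}

/-- An orientation of a complete multipartite graph whose parts are the fibres
of `P`: arcs only between different parts, and exactly one arc between any two
vertices in different parts. -/
def IsCMPOrientation {ι : Type*} (A : V → V → Prop) (P : V → ι) : Prop :=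
  (∀ u v, A u v → P u ≠ P v) ∧ ∀ u v, P u ≠ P v → (A u v ↔ ¬ A v u)


/-!
Fix any vertex `v`. Since no single vertex dominates, every vertex has an in-neighbour, and the
in-neighbourhood of `v` is a nonempty finite transitive subtournament, so it has a source `m`.
Then `{v, m}` dominates: a vertex not beaten by `v` is an in-neighbour of `v`, hence beaten by `m`.
An in-neighbour `z` of `m` cannot be an in-neighbour of `v`, so `v → z`, and the triangle
`z → m → v → z` is a closed dominating walk of length 3 through a dominating set of size 3.
-/

section

variable {A : V → V → Prop}

theorem domNum_le_ncard {S : Set V} (hS : Dom A S) : domNum A ≤ S.ncard :=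
  Nat.sInf_le ⟨S, rfl, hS⟩

theorem watchman_le_walkLength {l : List V} (hl : IsCDW A l) : watchman A ≤ walkLength l :=
  Nat.sInf_le ⟨l, hl, rfl⟩

theorem Dom.mono {S T : Set V} (hS : Dom A S) (hST : S ⊆ T) : Dom A T := fun v =>
  (hS v).imp (fun h => hST h) fun ⟨u, hu, huv⟩ => ⟨u, hST hu, huv⟩

theorem ncard_setOf_mem_le_length (l : List V) : {x | x ∈ l}.ncard ≤ l.length := by
  classical
  rw [← List.coe_toFinset, Set.ncard_coe_finset]
  exact l.toFinset_card_le

theorem isClosedWalk_triangle {a b c : V} (hab : A a b) (hbc : A b c) (hca : A c a) :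
    IsClosedWalk A [a, b, c] := by
  refine ⟨List.cons_ne_nil _ _, ?_, Or.inr ?_⟩
  · exact List.isChain_cons_cons.mpr ⟨hab, List.isChain_pair.mpr hbc⟩
  · rintro x y ⟨⟩ ⟨⟩
    exact hca

theorem IsTournament.asymm (hT : IsTournament A) {u v : V} (h : A u v) : ¬ A v u := by
  obtain rfl | huv := eq_or_ne u v
  · exact absurd h (hT.1 u)
  · exact (hT.2 u v huv).mp h

theorem IsTournament.exists_inNeighbour (hT : IsTournament A) {x : V} (hx : ¬ Dom A {x}) :
    ∃ u, A u x := by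
  simp only [Dom, Set.mem_singleton_iff, exists_eq_left, not_forall, not_or] at hx
  obtain ⟨u, hux, hxu⟩ := hx
  exact ⟨u, (hT.2 u x hux).mpr hxu⟩

theorem IsTournament.exists_source (hT : IsTournament A) {s : Finset V} (hs : s.Nonempty)
    (htrans : ∀ a b c, a ∈ s → b ∈ s → c ∈ s → A a b → A b c → A a c) :
    ∃ m ∈ s, ∀ x ∈ s, x ≠ m → A m x := by
  classical
  induction s using Finset.induction_on with
  | empty => exact absurd hs Finset.not_nonempty_empty
  | insert a s ha ih =>
    obtain rfl | hne := s.eq_empty_or_nonempty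
    · exact ⟨a, by simp, by simp⟩
    obtain ⟨m, hm, hsrc⟩ := ih hne fun a b c ha hb hc =>
      htrans a b c (Finset.mem_insert_of_mem ha) (Finset.mem_insert_of_mem hb)
        (Finset.mem_insert_of_mem hc)
    have ham : a ≠ m := ne_of_mem_of_not_mem hm ha |>.symm
    by_cases hma : A m a
    · refine ⟨m, Finset.mem_insert_of_mem hm, fun x hx hxm => ?_⟩
      obtain rfl | hx := Finset.mem_insert.mp hx
      exacts [hma, hsrc x hx hxm]
    · have ham' : A a m := (hT.2 a m ham).mpr hma
      refine ⟨a, Finset.mem_insert_self a s, fun x hx hxa => ?_⟩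
      obtain rfl | hx := Finset.mem_insert.mp hx
      · exact absurd rfl hxa
      obtain rfl | hxm := eq_or_ne x m
      · exact ham'
      exact htrans a m x (Finset.mem_insert_self a s) (Finset.mem_insert_of_mem hm)
        (Finset.mem_insert_of_mem hx) ham' (hsrc x hx hxm)

theorem IsTournament.dom_pair_of_source (hT : IsTournament A) {v m : V}
    (hm : ∀ x, A x v → x ≠ m → A m x) : Dom A {v, m} := by
  intro w
  by_cases hw : w = v ∨ w = m
  · exact Or.inl hw
  push Not at hw
  by_cases hvw : A v w
  · exact Or.inr ⟨v, Set.mem_insert v _, hvw⟩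
  · exact Or.inr ⟨m, Set.mem_insert_of_mem v rfl,
      hm w ((hT.2 w v hw.1).mpr hvw) hw.2⟩

theorem IsTournament.exists_isCDW_triangle [Fintype V] (hT : IsTournament A)
    (hlit : ∀ v a b c : V, A a v → A b v → A c v → A a b → A b c → A a c)
    (hin : ∀ x, ∃ u, A u x) (v : V) :
    ∃ z m, IsCDW A [z, m, v] := by
  classical
  obtain ⟨u, huv⟩ := hin v
  obtain ⟨m, hmv, hsrc⟩ := hT.exists_source (s := {x | A x v}) ⟨u, by simpa using huv⟩
    fun a b c ha hb hc => by
      simp only [Finset.mem_filter, Finset.mem_univ, true_and] at ha hb hc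
      exact hlit v a b c ha hb hc
  simp only [Finset.mem_filter, Finset.mem_univ, true_and] at hmv hsrc
  obtain ⟨z, hzm⟩ := hin m
  have hvz : A v z := by
    by_contra hvz
    have hzv : z ≠ v := fun h => hT.asymm hmv (h ▸ hzm)
    have hzm' : z ≠ m := fun h => hT.1 m (h ▸ hzm)
    exact hT.asymm hzm (hsrc z ((hT.2 z v hzv).mpr hvz) hzm')
  refine ⟨z, m, isClosedWalk_triangle hzm hmv hvz, (hT.dom_pair_of_source hsrc).mono ?_⟩
  intro x hx
  obtain rfl | rfl := hx <;> simp

end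

theorem stmt19 [Fintype V] (A : V → V → Prop) (hT : IsTournament A)
    (hlit : ∀ v a b c : V, A a v → A b v → A c v → A a b → A b c → A a c)
    (hγ : 1 < domNum A) :
    domNum A ≤ 3 ∧ watchman A ≤ 3 := by
  have hsmall : ∀ S : Set V, S.ncard ≤ 1 → ¬ Dom A S := fun S hS hdom => by
    have := domNum_le_ncard hdom
    omega
  obtain ⟨v⟩ : Nonempty V := by
    by_contra hV
    exact hsmall ∅ (by simp) fun v => (hV ⟨v⟩).elim
  have hin : ∀ x, ∃ u, A u x := fun x => hT.exists_inNeighbour (hsmall {x} (by simp))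
  obtain ⟨z, m, hl⟩ := hT.exists_isCDW_triangle hlit hin v
  exact ⟨(domNum_le_ncard hl.2).trans (ncard_setOf_mem_le_length _),
    watchman_le_walkLength hl⟩
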